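/- Let Z ∼ N(0,1), a > 0, and μ ≥ 0, and let S_t(x) = sgn(x)·max(|x| − t, 0) be the soft-threshold operator. Then E[(S_μ(aZ))²] = (μ² + a²)(1 − erf(μ/(√2·a))) − a·μ·√(2/π)·exp(−μ²/(2a²)). -/

import Mathlib

open MeasureTheory ProbabilityTheory Real

/-- The Gauss error function. -/
noncomputable def erf (x : ℝ) : ℝ := (2 / Real.sqrt π) * ∫ t in (0:ℝ)..x, Real.exp (-t^2)

/-- Soft thresholding at level `t`. -/
noncomputable def softT (t x : ℝ) : ℝ := Real.sign x * max (|x| - t) 0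

/-!
`S_μ(aZ)²` is a function of `|Z|` that vanishes for `|Z| ≤ μ / a`, so the moment equals
`2 ∫_{μ/a}^∞ (a t - μ)² φ(t) dt`. Since `φ' = -t φ` and `(erf (t / √2))' = 2 φ(t)`, the integrand
has the explicit antiderivative `-(a² + μ²) P(Z > t) - (a² t - 2 a μ) φ(t)`, which vanishes at `∞`.
-/

open Filter Set
open scoped Topology

local notation "φ" => gaussianPDFReal 0 1

lemma hasDerivAt_erf (x : ℝ) : HasDerivAt erf (2 / √π * exp (-x ^ 2)) x := by
  have hcont : Continuous fun t : ℝ => exp (-t ^ 2) := by fun_prop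
  exact (intervalIntegral.integral_hasDerivAt_right (hcont.intervalIntegrable _ _)
    (hcont.stronglyMeasurableAtFilter _ _) hcont.continuousAt).const_mul _

lemma tendsto_erf_atTop : Tendsto erf atTop (𝓝 1) := by
  have hint := intervalIntegral_tendsto_integral_Ioi 0
    (integrable_exp_neg_mul_sq one_pos).integrableOn tendsto_id
  rw [integral_gaussian_Ioi, div_one] at hint
  have hπ : √π ≠ 0 := by positivity
  convert hint.const_mul (2 / √π) using 2 with x
  · simp [erf]
  · field_simp

lemma gaussianPDFReal_zero_one (x : ℝ) :
    φ x = (√(2 * π))⁻¹ * exp (-(1 / 2) * x ^ 2) := by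
  simp only [gaussianPDFReal, NNReal.coe_one, mul_one, sub_zero]
  ring_nf

lemma hasDerivAt_gaussianPDFReal_zero_one (x : ℝ) : HasDerivAt φ (-x * φ x) x := by
  have h := ((hasDerivAt_pow 2 x).const_mul (-(1 / 2) : ℝ)).exp.const_mul (√(2 * π))⁻¹
  rw [funext gaussianPDFReal_zero_one]
  exact h.congr_deriv (by push_cast; ring)

lemma hasDerivAt_erf_div_sqrt_two (x : ℝ) :
    HasDerivAt (fun x => erf (x / √2)) (2 * φ x) x := by
  refine ((hasDerivAt_erf (x / √2)).comp x ((hasDerivAt_id x).div_const √2)).congr_deriv ?_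
  have h2 : √2 ≠ 0 := by positivity
  have hπ : √π ≠ 0 := by positivity
  rw [gaussianPDFReal_zero_one, div_pow, sq_sqrt zero_le_two, sqrt_mul zero_le_two]
  field_simp

lemma integrable_pow_mul_gaussianPDFReal_zero_one (n : ℕ) :
    Integrable fun x => x ^ n * φ x := by
  have h := (integrable_rpow_mul_exp_neg_mul_sq (one_half_pos (α := ℝ))
    (neg_one_lt_zero.trans_le n.cast_nonneg)).const_mul (√(2 * π))⁻¹
  refine h.congr (ae_of_all _ fun x => ?_)
  simp only [rpow_natCast, gaussianPDFReal_zero_one]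
  ring

lemma tendsto_pow_mul_gaussianPDFReal_zero_one_atTop (n : ℕ) :
    Tendsto (fun x => x ^ n * φ x) atTop (𝓝 0) := by
  have h := ((tendsto_rpow_abs_mul_exp_neg_mul_sq_cocompact (one_half_pos (α := ℝ)) n).mono_left
    atTop_le_cocompact).const_mul (√(2 * π))⁻¹
  rw [mul_zero] at h
  refine h.congr' ((eventually_ge_atTop 0).mono fun x hx => ?_)
  simp only [abs_of_nonneg hx, rpow_natCast, gaussianPDFReal_zero_one]
  ring

lemma integrable_sq_mul_gaussianPDFReal_zero_one (a μ : ℝ) :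
    Integrable fun t => (a * t - μ) ^ 2 * φ t := by
  have h := (((integrable_pow_mul_gaussianPDFReal_zero_one 2).const_mul (a ^ 2)).sub
    ((integrable_pow_mul_gaussianPDFReal_zero_one 1).const_mul (2 * a * μ))).add
    ((integrable_pow_mul_gaussianPDFReal_zero_one 0).const_mul (μ ^ 2))
  refine h.congr (ae_of_all _ fun t => ?_)
  simp only [Pi.add_apply, Pi.sub_apply]
  ring

/-- `(1 - erf (x / √2)) / 2` is the Gaussian tail probability `P(Z > x)`. -/
lemma integral_Ioi_sq_mul_gaussianPDFReal_zero_one (a μ x : ℝ) :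
    ∫ t in Ioi x, (a * t - μ) ^ 2 * φ t
      = (a ^ 2 + μ ^ 2) * ((1 - erf (x / √2)) / 2) + (a ^ 2 * x - 2 * a * μ) * φ x := by
  set F : ℝ → ℝ := fun x =>
    (a ^ 2 + μ ^ 2) * ((1 - erf (x / √2)) / 2) + (a ^ 2 * x - 2 * a * μ) * φ x
  have hderiv (t : ℝ) : HasDerivAt (fun t => -F t) ((a * t - μ) ^ 2 * φ t) t := by
    have h := ((((hasDerivAt_erf_div_sqrt_two t).const_sub 1).div_const 2).const_mul
      (a ^ 2 + μ ^ 2)).add ((((hasDerivAt_id t).const_mul (a ^ 2)).sub_const (2 * a * μ)).mul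
      (hasDerivAt_gaussianPDFReal_zero_one t))
    refine h.neg.congr_deriv ?_
    simp only [id]
    ring
  have hlim : Tendsto (fun t => -F t) atTop (𝓝 0) := by
    have herf : Tendsto (fun t => erf (t / √2)) atTop (𝓝 1) :=
      tendsto_erf_atTop.comp (tendsto_id.atTop_div_const (by positivity))
    have h := (((herf.const_sub 1).div_const 2).const_mul (a ^ 2 + μ ^ 2)).add
      (((tendsto_pow_mul_gaussianPDFReal_zero_one_atTop 1).const_mul (a ^ 2)).sub
        ((tendsto_pow_mul_gaussianPDFReal_zero_one_atTop 0).const_mul (2 * a * μ)))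
    convert h.neg using 2 with t
    · simp only [F, pow_one, pow_zero]
      ring
    · simp
  rw [integral_Ioi_of_hasDerivAt_of_tendsto' (fun t _ => hderiv t)
    (integrable_sq_mul_gaussianPDFReal_zero_one a μ).integrableOn hlim]
  ring

lemma sq_softT {μ : ℝ} (hμ : 0 ≤ μ) (y : ℝ) : softT μ y ^ 2 = max (|y| - μ) 0 ^ 2 := by
  rcases eq_or_ne y 0 with rfl | hy
  · simp [softT, hμ]
  · rcases Real.sign_apply_eq_of_ne_zero y hy with h | h <;> simp [softT, h]

lemma sq_softT_mul {a μ : ℝ} (ha : 0 < a) (hμ : 0 ≤ μ) (x : ℝ) :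
    softT μ (a * x) ^ 2 = (Ioi (μ / a)).indicator (fun t => (a * t - μ) ^ 2) |x| := by
  rw [sq_softT hμ, abs_mul, abs_of_pos ha]
  by_cases hx : μ < a * |x|
  · rw [indicator_of_mem (s := Ioi (μ / a)) ((div_lt_iff₀' ha).2 hx),
      max_eq_left (sub_nonneg.2 hx.le)]
  · rw [indicator_of_notMem (s := Ioi (μ / a)) fun h => hx ((div_lt_iff₀' ha).1 h),
      max_eq_right (by linarith), zero_pow two_ne_zero]

theorem stmt14 (a μ : ℝ) (ha : 0 < a) (hμ : 0 ≤ μ) :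
    ∫ z, (softT μ (a*z))^2 ∂(gaussianReal 0 1)
      = (μ^2 + a^2) * (1 - erf (μ/(Real.sqrt 2 * a)))
        - a * μ * Real.sqrt (2/π) * Real.exp (-μ^2/(2*a^2)) := by
  have hsymm (z : ℝ) : φ |z| = φ z := by simp only [gaussianPDFReal_zero_one, sq_abs]
  have hmoment : ∫ z, softT μ (a * z) ^ 2 ∂gaussianReal 0 1
      = 2 * ∫ t in Ioi (μ / a), (a * t - μ) ^ 2 * φ t := by
    rw [← inter_eq_right.2 (Ioi_subset_Ioi (div_nonneg hμ ha.le)),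
      ← setIntegral_indicator measurableSet_Ioi, ← integral_comp_abs,
      integral_gaussianReal_eq_integral_smul one_ne_zero]
    congr 1 with z
    rw [smul_eq_mul, sq_softT_mul ha hμ, ← hsymm, indicator_mul_left, mul_comm]
  have hpdf : 2 * φ (μ / a) = √(2 / π) * exp (-μ ^ 2 / (2 * a ^ 2)) := by
    have hπ : √π ≠ 0 := by positivity
    rw [gaussianPDFReal_zero_one, sqrt_mul zero_le_two, sqrt_div zero_le_two]
    field_simp
    rw [sq_sqrt zero_le_two]
  have hcancel : a ^ 2 * (μ / a) = a * μ := by field_simp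
  rw [hmoment, integral_Ioi_sq_mul_gaussianPDFReal_zero_one, div_div, mul_comm a √2, hcancel]
  linear_combination (-(a * μ)) * hpdf
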